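/- For every η ≥ 0, misinformation MIS is differentiable at η and MIS′(η) = s·(M − 1)·∫_ℝ |y|·(μ(y) − μ̄)/D(η,y)² · g(y) dy. -/

import Mathlib

open MeasureTheory

/-- Density of the normal distribution `N(0, σ²)`. -/
noncomputable def gauss (σ y : ℝ) : ℝ :=
  (Real.sqrt (2 * Real.pi * σ ^ 2))⁻¹ * Real.exp (-(y ^ 2) / (2 * σ ^ 2))

/-- Mean highlighting propensity `μ̄ = ∫ μ(y)·g(y) dy`. -/
noncomputable def mubar (σ : ℝ) (μ : ℝ → ℝ) : ℝ :=
  ∫ y : ℝ, μ y * gauss σ y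

/-- Denominator `D(η,y) = M·(1 + η·μ̄) + η·(μ(y) − μ̄)`. -/
noncomputable def Dfun (σ : ℝ) (μ : ℝ → ℝ) (M η y : ℝ) : ℝ :=
  M * (1 + η * mubar σ μ) + η * (μ y - mubar σ μ)

/-- Expected popularity `π(η,y) = (1 + η·μ(y))/D(η,y)`. -/
noncomputable def popEx (σ : ℝ) (μ : ℝ → ℝ) (M η y : ℝ) : ℝ :=
  (1 + η * μ y) / Dfun σ μ M η y

/-- The affine clicking response
`Λ(z) = (M + log β·(M − ζ₀ + ζ₁·z))/(M + log β·M·(M − 1)/2)`. -/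
noncomputable def Lam (M β ζ₀ ζ₁ z : ℝ) : ℝ :=
  (M + Real.log β * (M - ζ₀ + ζ₁ * z)) / (M + Real.log β * M * (M - 1) / 2)

/-- The slope of `Λ`: `s = ζ₁·log β/(M + log β·M·(M − 1)/2)`. -/
noncomputable def slopeLam (M β ζ₁ : ℝ) : ℝ :=
  ζ₁ * Real.log β / (M + Real.log β * M * (M - 1) / 2)

/-- Misinformation `MIS(η) = ∫ |y|·Λ(π(η,y))·g(y) dy` (true state `θ = 0`). -/
noncomputable def MIS (σ : ℝ) (μ : ℝ → ℝ) (M β ζ₀ ζ₁ η : ℝ) : ℝ :=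
  ∫ y : ℝ, |y| * Lam M β ζ₀ ζ₁ (popEx σ μ M η y) * gauss σ y

open Topology

/-! Since `Λ` is affine, `MIS(t) = ∫ Λ(π(t,y)) · |y| g(y) dy` with
`∂ₜ Λ(π(t,y)) = s·(M − 1)·(μ(y) − μ̄)/D(t,y)²`. For `t > −1/2` the weight `(M − 1)·μ̄ + μ(y)`
of `t` in `D(t,y) = M + t·((M − 1)·μ̄ + μ(y))` lies in `[0, M]`, so `D ≥ M/2 ≥ 1` and this
derivative is bounded by `|s|·(M − 1)`, uniformly in `y`. As `|y| g(y)` is integrable, dominated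
convergence lets us differentiate under the integral sign. -/

theorem hasDerivAt_integral_mul_of_bounded {α : Type*} [MeasurableSpace α] {ν : Measure α}
    {w : α → ℝ} (hw : Integrable w ν) {f f' : ℝ → α → ℝ} {s : Set ℝ} {x₀ C₀ C : ℝ}
    (hs : s ∈ 𝓝 x₀) (hf_meas : ∀ t, AEStronglyMeasurable (f t) ν)
    (hf'_meas : AEStronglyMeasurable (f' x₀) ν) (hf_le : ∀ y, |f x₀ y| ≤ C₀)
    (hf'_le : ∀ t ∈ s, ∀ y, |f' t y| ≤ C)
    (hf' : ∀ t ∈ s, ∀ y, HasDerivAt (f · y) (f' t y) t) :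
    HasDerivAt (fun t => ∫ y, f t y * w y ∂ν) (∫ y, f' x₀ y * w y ∂ν) x₀ := by
  refine (hasDerivAt_integral_of_dominated_loc_of_deriv_le (bound := fun y => C * ‖w y‖) hs
    (.of_forall fun t => (hf_meas t).mul hw.aestronglyMeasurable)
    (hw.bdd_mul (hf_meas x₀) (.of_forall hf_le)) (hf'_meas.mul hw.aestronglyMeasurable)
    (.of_forall fun y t ht => ?_) (hw.norm.const_mul C)
    (.of_forall fun y t ht => (hf' t ht y).mul_const (w y))).2
  rw [norm_mul]
  exact mul_le_mul_of_nonneg_right (hf'_le t ht y) (norm_nonneg _)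

theorem gauss_eq_gaussianPDFReal (σ : ℝ) :
    gauss σ = ProbabilityTheory.gaussianPDFReal 0 (σ ^ 2).toNNReal := by
  ext y
  simp [gauss, ProbabilityTheory.gaussianPDFReal, Real.coe_toNNReal _ (sq_nonneg σ)]

theorem gauss_nonneg (σ y : ℝ) : 0 ≤ gauss σ y := by
  rw [gauss_eq_gaussianPDFReal]
  exact ProbabilityTheory.gaussianPDFReal_nonneg _ _ _

theorem integrable_gauss (σ : ℝ) : Integrable (gauss σ) := by
  rw [gauss_eq_gaussianPDFReal]
  exact ProbabilityTheory.integrable_gaussianPDFReal _ _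

theorem integral_gauss {σ : ℝ} (hσ : σ ≠ 0) : ∫ y, gauss σ y = 1 := by
  rw [gauss_eq_gaussianPDFReal]
  exact ProbabilityTheory.integral_gaussianPDFReal_eq_one _ (by simpa using hσ)

theorem integrable_abs_mul_gauss {σ : ℝ} (hσ : σ ≠ 0) : Integrable (fun y => |y| * gauss σ y) := by
  have hb : (0 : ℝ) < (2 * σ ^ 2)⁻¹ := by positivity
  refine ((integrable_mul_exp_neg_mul_sq hb).abs.const_mul
    (Real.sqrt (2 * Real.pi * σ ^ 2))⁻¹).congr (.of_forall fun y => ?_)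
  simp only [gauss, abs_mul, abs_of_nonneg (Real.exp_nonneg _)]
  rw [show -y ^ 2 / (2 * σ ^ 2) = -(2 * σ ^ 2)⁻¹ * y ^ 2 by ring]
  ring

section bounds

variable {σ : ℝ} {μ : ℝ → ℝ}

theorem mubar_mem_Icc (hσ : σ ≠ 0) (hμmeas : Measurable μ) (hμ : ∀ y, μ y ∈ Set.Icc (0 : ℝ) 1) :
    mubar σ μ ∈ Set.Icc (0 : ℝ) 1 := by
  have hle : ∀ y, μ y * gauss σ y ≤ gauss σ y := fun y =>
    mul_le_of_le_one_left (gauss_nonneg σ y) (hμ y).2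
  have hint : Integrable (fun y => μ y * gauss σ y) :=
    (integrable_gauss σ).bdd_mul hμmeas.aestronglyMeasurable
      (.of_forall fun y => (abs_le.2 ⟨by linarith [(hμ y).1], (hμ y).2⟩))
  refine ⟨integral_nonneg fun y => mul_nonneg (hμ y).1 (gauss_nonneg σ y), ?_⟩
  calc mubar σ μ ≤ ∫ y, gauss σ y := integral_mono hint (integrable_gauss σ) hle
    _ = 1 := integral_gauss hσ

theorem abs_sub_mubar_le_one (hσ : σ ≠ 0) (hμmeas : Measurable μ)
    (hμ : ∀ y, μ y ∈ Set.Icc (0 : ℝ) 1) (y : ℝ) : |μ y - mubar σ μ| ≤ 1 := by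
  have := mubar_mem_Icc hσ hμmeas hμ
  exact abs_sub_le_iff.2 ⟨by linarith [(hμ y).2, this.1], by linarith [(hμ y).1, this.2]⟩

theorem Dfun_eq (M t y : ℝ) :
    Dfun σ μ M t y = M + t * ((M - 1) * mubar σ μ + μ y) := by
  unfold Dfun; ring

theorem one_le_Dfun (hσ : σ ≠ 0) (hμmeas : Measurable μ) (hμ : ∀ y, μ y ∈ Set.Icc (0 : ℝ) 1)
    {M t : ℝ} (hM : 2 ≤ M) (ht : -(1 / 2) ≤ t) (y : ℝ) : 1 ≤ Dfun σ μ M t y := by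
  obtain ⟨hm0, hm1⟩ := mubar_mem_Icc hσ hμmeas hμ
  obtain ⟨h0, h1⟩ := hμ y
  have hc0 : 0 ≤ (M - 1) * mubar σ μ + μ y := by nlinarith
  have hcM : (M - 1) * mubar σ μ + μ y ≤ M := by nlinarith
  rw [Dfun_eq]
  rcases le_or_gt 0 t with h | h <;> nlinarith

theorem popEx_mem_Icc (hσ : σ ≠ 0) (hμmeas : Measurable μ) (hμ : ∀ y, μ y ∈ Set.Icc (0 : ℝ) 1)
    {M t : ℝ} (hM : 2 ≤ M) (ht : 0 ≤ t) (y : ℝ) : popEx σ μ M t y ∈ Set.Icc (0 : ℝ) 1 := by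
  have hD := one_le_Dfun hσ hμmeas hμ hM (by linarith) (t := t) y
  have hm0 := (mubar_mem_Icc hσ hμmeas hμ).1
  have hN : 0 ≤ 1 + t * μ y := by nlinarith [(hμ y).1]
  refine ⟨div_nonneg hN (by linarith), (div_le_one (by linarith)).2 ?_⟩
  rw [Dfun_eq]
  nlinarith [mul_nonneg ht (mul_nonneg (by linarith : (0 : ℝ) ≤ M - 1) hm0)]

theorem abs_div_Dfun_sq_le (hσ : σ ≠ 0) (hμmeas : Measurable μ)
    (hμ : ∀ y, μ y ∈ Set.Icc (0 : ℝ) 1) {M t : ℝ} (hM : 2 ≤ M) (ht : -(1 / 2) ≤ t) (y : ℝ) :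
    |(M - 1) * (μ y - mubar σ μ) / Dfun σ μ M t y ^ 2| ≤ M - 1 := by
  have hD := one_le_Dfun hσ hμmeas hμ hM ht y
  have hμy := abs_sub_mubar_le_one hσ hμmeas hμ y
  rw [abs_div, abs_mul, abs_of_nonneg (by linarith : (0 : ℝ) ≤ M - 1), abs_pow,
    abs_of_pos (by linarith : (0 : ℝ) < Dfun σ μ M t y), div_le_iff₀ (by positivity)]
  exact mul_le_mul_of_nonneg_left (by nlinarith) (by linarith)

end bounds

theorem hasDerivAt_popEx (σ : ℝ) (μ : ℝ → ℝ) (M y t : ℝ) (hD : Dfun σ μ M t y ≠ 0) :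
    HasDerivAt (fun t => popEx σ μ M t y)
      ((M - 1) * (μ y - mubar σ μ) / Dfun σ μ M t y ^ 2) t := by
  have hlin : ∀ a b : ℝ, HasDerivAt (fun t : ℝ => a + t * b) b t := fun a b => by
    simpa using ((hasDerivAt_id t).mul_const b).const_add a
  simp_rw [popEx, Dfun_eq] at hD ⊢
  refine ((hlin 1 (μ y)).div (hlin M ((M - 1) * mubar σ μ + μ y)) hD).congr_deriv ?_
  ring

theorem Lam_eq (M β ζ₀ ζ₁ z : ℝ) :
    Lam M β ζ₀ ζ₁ z = Lam M β ζ₀ ζ₁ 0 + slopeLam M β ζ₁ * z := by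
  unfold Lam slopeLam; ring

theorem hasDerivAt_Lam_comp {p : ℝ → ℝ} {p' t : ℝ} (M β ζ₀ ζ₁ : ℝ) (hp : HasDerivAt p p' t) :
    HasDerivAt (fun t => Lam M β ζ₀ ζ₁ (p t)) (slopeLam M β ζ₁ * p') t := by
  simp_rw [Lam_eq M β ζ₀ ζ₁ (p _)]
  exact (hp.const_mul _).const_add _

theorem abs_Lam_le {M β ζ₀ ζ₁ z : ℝ} (hz : z ∈ Set.Icc (0 : ℝ) 1) :
    |Lam M β ζ₀ ζ₁ z| ≤ |Lam M β ζ₀ ζ₁ 0| + |slopeLam M β ζ₁| := by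
  rw [Lam_eq]
  refine (abs_add_le _ _).trans (add_le_add le_rfl ?_)
  rw [abs_mul]
  exact mul_le_of_le_one_right (abs_nonneg _) (abs_le.2 ⟨by linarith [hz.1], hz.2⟩)

theorem MIS_eq_integral (σ : ℝ) (μ : ℝ → ℝ) (M β ζ₀ ζ₁ t : ℝ) :
    MIS σ μ M β ζ₀ ζ₁ t = ∫ y, Lam M β ζ₀ ζ₁ (popEx σ μ M t y) * (|y| * gauss σ y) := by
  unfold MIS
  congr 1 with y
  ring

theorem MIS_hasDerivAt_general (σ : ℝ) (hσ : 0 < σ)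
    (μ : ℝ → ℝ) (hμmeas : Measurable μ) (hμ : ∀ y, μ y ∈ Set.Icc (0:ℝ) 1)
    (M : ℝ) (hM : 2 ≤ M) (β ζ₀ ζ₁ : ℝ)
    (η : ℝ) (hη : 0 ≤ η) :
    HasDerivAt (fun t => MIS σ μ M β ζ₀ ζ₁ t)
      (slopeLam M β ζ₁ * (M - 1) *
        ∫ y : ℝ, |y| * (μ y - mubar σ μ) / (Dfun σ μ M η y) ^ 2 * gauss σ y)
      η := by
  have hσ0 := hσ.ne'
  have hs : Set.Ioi (-(1 / 2) : ℝ) ∈ 𝓝 η := Ioi_mem_nhds (by linarith)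
  simp_rw [MIS_eq_integral]
  convert hasDerivAt_integral_mul_of_bounded (integrable_abs_mul_gauss hσ0) hs
    (f := fun t y => Lam M β ζ₀ ζ₁ (popEx σ μ M t y))
    (f' := fun t y => slopeLam M β ζ₁ * ((M - 1) * (μ y - mubar σ μ) / Dfun σ μ M t y ^ 2))
    (fun t => Measurable.aestronglyMeasurable (by unfold Lam popEx Dfun; fun_prop))
    (Measurable.aestronglyMeasurable (by unfold Dfun; fun_prop))
    (fun y => abs_Lam_le (popEx_mem_Icc hσ0 hμmeas hμ hM hη y))
    (fun t ht y => by
      rw [abs_mul]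
      exact mul_le_mul_of_nonneg_left (abs_div_Dfun_sq_le hσ0 hμmeas hμ hM ht.le y)
        (abs_nonneg _))
    (fun t ht y => hasDerivAt_Lam_comp M β ζ₀ ζ₁ (hasDerivAt_popEx σ μ M y t
      (zero_lt_one.trans_le (one_le_Dfun hσ0 hμmeas hμ hM ht.le y)).ne')) using 1
  rw [← integral_const_mul]
  congr 1 with y
  ring

/-- For every `η ≥ 0`, `MIS` is differentiable at `η` with
`MIS′(η) = s·(M − 1)·∫ |y|·(μ(y) − μ̄)/D(η,y)² · g(y) dy`. -/
theorem MIS_hasDerivAt (σ : ℝ) (hσ : 0 < σ)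
    (μ : ℝ → ℝ) (hμmeas : Measurable μ) (hμ : ∀ y, μ y ∈ Set.Icc (0:ℝ) 1)
    (M : ℝ) (hM : 2 ≤ M) (β ζ₀ ζ₁ : ℝ) (hβ : 1 < β) (hζ₁ : 0 < ζ₁)
    (η : ℝ) (hη : 0 ≤ η) :
    HasDerivAt (fun t => MIS σ μ M β ζ₀ ζ₁ t)
      (slopeLam M β ζ₁ * (M - 1) *
        ∫ y : ℝ, |y| * (μ y - mubar σ μ) / (Dfun σ μ M η y) ^ 2 * gauss σ y)
      η :=
  MIS_hasDerivAt_general σ hσ μ hμmeas hμ M hM β ζ₀ ζ₁ η hη
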